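/- Let Ψ be a highest weight vector of U(B₀) and α = (α_1,...,α_n) a sequence of parameters with t > n a positive integer. If x_t^-(α) Ψ = 0, then for all m ≥ 0 and all positive integers k_1,...,k_n: x_{t+m}^-(α) x_{k_1}^- ··· x_{k_n}^- Ψ = 0, h_{t+m}(α) x_{k_1}^- ··· x_{k_n}^- Ψ = 0, and x_{t+m}^+(α) x_{k_1}^- ··· x_{k_n}^- Ψ = 0. -/

import Mathlib

open scoped BigOperators

/-- A representation of the Borel subalgebra `U(B₀)` of the `sl₂` loop algebra:
operators `x_k^+, h_k` (`k ≥ 0`) and `x_k^-` (`k ≥ 1`, the value of `xm` at `0`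
being irrelevant) on a complex vector space, satisfying the loop relations. -/
structure BorelRep (V : Type*) [AddCommGroup V] [Module ℂ V] where
  xp : ℕ → Module.End ℂ V
  xm : ℕ → Module.End ℂ V
  h : ℕ → Module.End ℂ V
  h_xp : ∀ j k, ⁅h j, xp k⁆ = 2 • xp (j + k)
  h_xm : ∀ j k, 1 ≤ k → ⁅h j, xm k⁆ = -(2 • xm (j + k))
  xp_xm : ∀ j k, 1 ≤ k → ⁅xp j, xm k⁆ = h (j + k)
  h_h : ∀ j k, ⁅h j, h k⁆ = 0
  xp_xp : ∀ j k, ⁅xp j, xp k⁆ = 0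
  xm_xm : ∀ j k, 1 ≤ j → 1 ≤ k → ⁅xm j, xm k⁆ = 0

/-- The `k`-th elementary symmetric polynomial of `α_1, …, α_n`. -/
noncomputable def esymm {n : ℕ} (α : Fin n → ℂ) (k : ℕ) : ℂ :=
  ∑ s ∈ Finset.powersetCard k (Finset.univ : Finset (Fin n)), ∏ i ∈ s, α i

variable {V : Type*} [AddCommGroup V] [Module ℂ V]

/-- `x_m^+(α) = Σ_{k=0}^n (-1)^k e_k(α) x_{m-k}^+`. -/
noncomputable def xpP (B : BorelRep V) {n : ℕ} (α : Fin n → ℂ) (m : ℕ) :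
    Module.End ℂ V :=
  ∑ k ∈ Finset.range (n + 1), ((-1 : ℂ) ^ k * esymm α k) • B.xp (m - k)

/-- `x_m^-(α) = Σ_{k=0}^n (-1)^k e_k(α) x_{m-k}^-`. -/
noncomputable def xmP (B : BorelRep V) {n : ℕ} (α : Fin n → ℂ) (m : ℕ) :
    Module.End ℂ V :=
  ∑ k ∈ Finset.range (n + 1), ((-1 : ℂ) ^ k * esymm α k) • B.xm (m - k)

/-- `h_m(α) = Σ_{k=0}^n (-1)^k e_k(α) h_{m-k}`. -/
noncomputable def hP (B : BorelRep V) {n : ℕ} (α : Fin n → ℂ) (m : ℕ) :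
    Module.End ℂ V :=
  ∑ k ∈ Finset.range (n + 1), ((-1 : ℂ) ^ k * esymm α k) • B.h (m - k)

/-- The cyclic submodule `U(B₀)Ψ`: the span of all vectors obtained from `Ψ`
by words in the generators. -/
def cyclic (B : BorelRep V) (Ψ : V) : Submodule ℂ V :=
  Submodule.span ℂ {v | ∃ w : List (Module.End ℂ V),
    (∀ f ∈ w, (∃ k, f = B.xp k) ∨ (∃ k, 1 ≤ k ∧ f = B.xm k) ∨ (∃ k, f = B.h k)) ∧
    v = w.prod Ψ}

/-!
The operators `x_m^±(α)`, `h_m(α)` with `m > n` satisfy the same bracket relations with the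
generators as `x_m^±`, `h_m` themselves, since every index `m - k` occurring in them is
positive. Bracketing `x_t^-(α) Ψ = 0` with `h_m` therefore gives `x_{t+m}^-(α) Ψ = 0`, and
bracketing with `x_0^+` gives `h_{t+m}(α) Ψ = 0`. The operators `x_{t+m}^-(α)` commute with
every `x_k^-`; commuting `h_{t+m}(α)` and `x_{t+m}^+(α)` past an `x_k^-` only produces
`x_{t+m+k}^-(α)` and `h_{t+m+k}(α)` respectively, so induction on the number of lowering
operators finishes the proof.
-/

section WindowSum

variable {R : Type*} [CommRing R]

-- For `k > m`, truncated subtraction turns `f (m - k)` into `f 0`; the lemmas below need `n ≤ m`.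
def windowSum {M : Type*} [AddCommMonoid M] [Module R M] (c : ℕ → R) (n : ℕ) (f : ℕ → M)
    (m : ℕ) : M :=
  ∑ k ∈ Finset.range (n + 1), c k • f (m - k)

variable {L : Type*} [LieRing L] [LieAlgebra R L] {c : ℕ → R} {n : ℕ}

lemma lie_windowSum {a : L} {f g : ℕ → L} {j m : ℕ} (r : R) (hm : n < m)
    (h : ∀ i, 1 ≤ i → ⁅a, f i⁆ = r • g (j + i)) :
    ⁅a, windowSum c n f m⁆ = r • windowSum c n g (j + m) := by
  simp only [windowSum, lie_sum, lie_smul, Finset.smul_sum]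
  refine Finset.sum_congr rfl fun k hk => ?_
  have hkn : k ≤ n := Nat.lt_succ_iff.mp (Finset.mem_range.mp hk)
  rw [h _ (by omega), smul_comm, show j + (m - k) = j + m - k by omega]

lemma windowSum_lie {a : L} {f g : ℕ → L} {j m : ℕ} (r : R) (hm : n ≤ m)
    (h : ∀ i, ⁅f i, a⁆ = r • g (i + j)) :
    ⁅windowSum c n f m, a⁆ = r • windowSum c n g (m + j) := by
  simp only [windowSum, sum_lie, smul_lie, Finset.smul_sum]
  refine Finset.sum_congr rfl fun k hk => ?_
  have hkn : k ≤ n := Nat.lt_succ_iff.mp (Finset.mem_range.mp hk)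
  rw [h, smul_comm, show m - k + j = m + j - k by omega]

end WindowSum

lemma Module.End.apply_apply_eq_lie_apply_add {R M : Type*} [Semiring R] [AddCommGroup M]
    [Module R M] (X f : Module.End R M) (v : M) : X (f v) = ⁅X, f⁆ v + f (X v) := by
  rw [Ring.lie_def, LinearMap.sub_apply, Module.End.mul_apply, Module.End.mul_apply,
    sub_add_cancel]

noncomputable def paramCoeff {n : ℕ} (α : Fin n → ℂ) (k : ℕ) : ℂ :=
  (-1) ^ k * esymm α k

namespace BorelRep

attribute [local instance] LieRing.ofAssociativeRing

variable (B : BorelRep V) {n : ℕ}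

section Brackets

variable (α : Fin n → ℂ)

lemma xmP_eq_windowSum (m : ℕ) : xmP B α m = windowSum (paramCoeff α) n B.xm m := rfl

lemma hP_eq_windowSum (m : ℕ) : hP B α m = windowSum (paramCoeff α) n B.h m := rfl

lemma xpP_eq_windowSum (m : ℕ) : xpP B α m = windowSum (paramCoeff α) n B.xp m := rfl

lemma lie_h_xmP (j : ℕ) {m : ℕ} (hm : n < m) :
    ⁅B.h j, xmP B α m⁆ = (-2 : ℂ) • xmP B α (j + m) :=
  lie_windowSum _ hm fun i hi => by rw [B.h_xm j i hi]; module

lemma lie_xp_xmP (j : ℕ) {m : ℕ} (hm : n < m) : ⁅B.xp j, xmP B α m⁆ = hP B α (j + m) := by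
  rw [xmP_eq_windowSum, hP_eq_windowSum, ← one_smul ℂ (windowSum _ _ B.h _)]
  exact lie_windowSum _ hm fun i hi => by rw [B.xp_xm j i hi, one_smul]

lemma commute_xm_xmP {j : ℕ} (hj : 1 ≤ j) {m : ℕ} (hm : n < m) :
    Commute (B.xm j) (xmP B α m) := by
  rw [commute_iff_lie_eq, xmP_eq_windowSum,
    ← zero_smul ℂ (windowSum (paramCoeff α) n B.xm (j + m))]
  exact lie_windowSum _ hm fun i hi => by rw [B.xm_xm j i hj hi, zero_smul]

lemma hP_lie_xm {j : ℕ} (hj : 1 ≤ j) {m : ℕ} (hm : n ≤ m) :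
    ⁅hP B α m, B.xm j⁆ = (-2 : ℂ) • xmP B α (m + j) :=
  windowSum_lie _ hm fun i => by rw [B.h_xm i j hj]; module

lemma xpP_lie_xm {j : ℕ} (hj : 1 ≤ j) {m : ℕ} (hm : n ≤ m) :
    ⁅xpP B α m, B.xm j⁆ = hP B α (m + j) := by
  rw [xpP_eq_windowSum, hP_eq_windowSum, ← one_smul ℂ (windowSum _ _ B.h _)]
  exact windowSum_lie _ hm fun i => by rw [B.xp_xm i j hj, one_smul]

end Brackets

inductive IsXmWord (Ψ : V) : V → Prop
  | self : IsXmWord Ψ Ψ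
  | xm {k : ℕ} {v : V} : 1 ≤ k → IsXmWord Ψ v → IsXmWord Ψ (B.xm k v)

lemma isXmWord_prod {Ψ : V} {w : List (Module.End ℂ V)}
    (hw : ∀ f ∈ w, ∃ k, 1 ≤ k ∧ f = B.xm k) : B.IsXmWord Ψ (w.prod Ψ) := by
  induction w with
  | nil => exact .self
  | cons f w ih =>
    obtain ⟨k, hk, rfl⟩ := hw f List.mem_cons_self
    exact .xm hk (ih fun g hg => hw g (List.mem_cons_of_mem _ hg))

section HighestWeight

variable {Ψ : V} {α : Fin n → ℂ} {t : ℕ}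

lemma xmP_add_apply_eq_zero {d : ℕ → ℂ} (hh : ∀ k, B.h k Ψ = d k • Ψ) (ht : n < t)
    (h0 : xmP B α t Ψ = 0) (m : ℕ) : xmP B α (t + m) Ψ = 0 := by
  have hbracket := (B.h m).apply_apply_eq_lie_apply_add (xmP B α t) Ψ
  rw [h0, hh, map_smul, h0, smul_zero, add_zero, map_zero, lie_h_xmP B α m ht,
    LinearMap.smul_apply] at hbracket
  rw [add_comm]
  exact (smul_eq_zero.mp hbracket.symm).resolve_left (by norm_num)

lemma xmP_add_apply_eq_zero_of_isXmWord {d : ℕ → ℂ} (hh : ∀ k, B.h k Ψ = d k • Ψ)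
    (ht : n < t) (h0 : xmP B α t Ψ = 0) {v : V} (hv : B.IsXmWord Ψ v) (m : ℕ) :
    xmP B α (t + m) v = 0 := by
  induction hv with
  | self => exact B.xmP_add_apply_eq_zero hh ht h0 m
  | xm hk _ ih =>
    rw [← Module.End.mul_apply, ← (B.commute_xm_xmP α hk (by omega)).eq, Module.End.mul_apply,
      ih, map_zero]

lemma hP_add_apply_eq_zero_of_isXmWord {d : ℕ → ℂ} (hxp : ∀ k, B.xp k Ψ = 0)
    (hh : ∀ k, B.h k Ψ = d k • Ψ) (ht : n < t) (h0 : xmP B α t Ψ = 0) {v : V}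
    (hv : B.IsXmWord Ψ v) (m : ℕ) : hP B α (t + m) v = 0 := by
  induction hv generalizing m with
  | self =>
    have hbracket := (B.xp 0).apply_apply_eq_lie_apply_add (xmP B α (t + m)) Ψ
    rwa [B.xmP_add_apply_eq_zero hh ht h0, hxp, map_zero, map_zero, add_zero,
      lie_xp_xmP B α 0 (by omega), zero_add, eq_comm] at hbracket
  | @xm k v hk hv ih =>
    rw [Module.End.apply_apply_eq_lie_apply_add, ih, map_zero, add_zero,
      hP_lie_xm B α hk (by omega), LinearMap.smul_apply, add_assoc,
      B.xmP_add_apply_eq_zero_of_isXmWord hh ht h0 hv, smul_zero]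

lemma xpP_add_apply_eq_zero_of_isXmWord {d : ℕ → ℂ} (hxp : ∀ k, B.xp k Ψ = 0)
    (hh : ∀ k, B.h k Ψ = d k • Ψ) (ht : n < t) (h0 : xmP B α t Ψ = 0) {v : V}
    (hv : B.IsXmWord Ψ v) (m : ℕ) : xpP B α (t + m) v = 0 := by
  induction hv generalizing m with
  | self => simp [xpP, hxp]
  | @xm k v hk hv ih =>
    rw [Module.End.apply_apply_eq_lie_apply_add, ih, map_zero, add_zero,
      xpP_lie_xm B α hk (by omega), add_assoc,
      B.hP_add_apply_eq_zero_of_isXmWord hxp hh ht h0 hv]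

end HighestWeight

end BorelRep

/-- If `Ψ` is a highest weight vector of `U(B₀)` and `x_t^-(α) Ψ = 0` for some
`t > n`, then for all `m ≥ 0` and all positive integers `k_1, …, k_n`,
`x_{t+m}^-(α)`, `h_{t+m}(α)` and `x_{t+m}^+(α)` annihilate
`x_{k_1}^- ⋯ x_{k_n}^- Ψ`. -/
theorem stmt9 (B : BorelRep V) (Ψ : V) (d : ℕ → ℂ)
    (hxpΨ : ∀ k, B.xp k Ψ = 0) (hhΨ : ∀ k, B.h k Ψ = d k • Ψ)
    {n : ℕ} (α : Fin n → ℂ) (t : ℕ) (ht : n < t) (h0 : xmP B α t Ψ = 0) :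
    ∀ m : ℕ, ∀ k : Fin n → ℕ, (∀ i, 1 ≤ k i) →
      xmP B α (t + m) (((List.ofFn fun i => B.xm (k i)).prod) Ψ) = 0 ∧
      hP B α (t + m) (((List.ofFn fun i => B.xm (k i)).prod) Ψ) = 0 ∧
      xpP B α (t + m) (((List.ofFn fun i => B.xm (k i)).prod) Ψ) = 0 := by
  intro m k hk
  have hword : B.IsXmWord Ψ ((List.ofFn fun i => B.xm (k i)).prod Ψ) :=
    B.isXmWord_prod (List.forall_mem_ofFn_iff.mpr fun i => ⟨k i, hk i, rfl⟩)
  exact ⟨B.xmP_add_apply_eq_zero_of_isXmWord hhΨ ht h0 hword m,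
    B.hP_add_apply_eq_zero_of_isXmWord hxpΨ hhΨ ht h0 hword m,
    B.xpP_add_apply_eq_zero_of_isXmWord hxpΨ hhΨ ht h0 hword m⟩
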